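/- Let T₀ be a rooted tree with root v₀ and trunk (a longest path starting at v₀) containing vertices v_i, v_j with heights h(v_i) < h(v_j). If T₀' is obtained from T₀ by detaching a pendant vertex w ≠ v₀ from v_i and attaching it to v_j instead, then ν(T₀') < ν(T₀). -/

import Mathlib

open Matrix BigOperators
open scoped Classical

/-- Weighted Laplacian of a weight function. -/
noncomputable def wLap {V : Type*} [Fintype V] [DecidableEq V] (w : V → V → ℝ) : Matrix V V ℝ :=
  Matrix.diagonal (fun v => ∑ u, w v u) - Matrix.of w

/-- The `k`-th smallest eigenvalue of a real matrix (0 if not Hermitian / out of range). -/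
noncomputable def kthEig {W : Type*} [Fintype W] [DecidableEq W] (A : Matrix W W ℝ) (k : ℕ) : ℝ :=
  if hA : A.IsHermitian then
    if h : k < Fintype.card W then
      (let g : Fin (Fintype.card W) → ℝ := hA.eigenvalues ∘ (Fintype.equivFin W).symm
       (g ∘ Tuple.sort g) ⟨k, h⟩)
    else 0
  else 0

noncomputable def minEig {W : Type*} [Fintype W] [DecidableEq W] (A : Matrix W W ℝ) : ℝ := kthEig A 0

/-- algebraic connectivity of a simple graph -/
noncomputable def algConn {V : Type*} [Fintype V] [DecidableEq V] (G : SimpleGraph V) : ℝ :=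
  kthEig (G.lapMatrix ℝ) 1

/-- Dirichlet matrix: weighted Laplacian restricted to an interior set `S`. -/
noncomputable def dirichletMatrix {V : Type*} [Fintype V] [DecidableEq V]
    (w : V → V → ℝ) (S : Set V) : Matrix S S ℝ :=
  (wLap w).submatrix Subtype.val Subtype.val

noncomputable def degSeq {V : Type*} [Fintype V] [DecidableEq V] (G : SimpleGraph V) : Multiset ℕ :=
  Finset.univ.val.map (fun v => G.degree v)

/-- Edge weights of a rooted tree: every edge has weight 1 except the
boundary edge from the root `v₀` to the distinguished neighbor `x`,
which has weight `w₀`. -/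
noncomputable def treeWeight {V : Type*} [Fintype V] [DecidableEq V]
    (T : SimpleGraph V) (v₀ x : V) (w₀ : ℝ) : V → V → ℝ :=
  fun u v => if T.Adj u v then
    (if (u = v₀ ∧ v = x) ∨ (u = x ∧ v = v₀) then w₀ else 1) else 0

/-- First Dirichlet eigenvalue of a rooted tree (root = unique boundary vertex). -/
noncomputable def nuRooted {V : Type*} [Fintype V] [DecidableEq V]
    (T : SimpleGraph V) (v₀ x : V) (w₀ : ℝ) : ℝ :=
  minEig (dirichletMatrix (treeWeight T v₀ x w₀) ({v₀}ᶜ : Set V))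

/-- A caterpillar: the non-pendant vertices can be arranged as a path. -/
noncomputable def IsCaterpillar {V : Type*} [Fintype V] [DecidableEq V]
    (T : SimpleGraph V) : Prop :=
  ∃ P : List V, P.Nodup ∧ (∀ v, v ∈ P ↔ 1 < T.degree v) ∧ P.Chain' T.Adj

/-!
Let `f` be the positive Dirichlet eigenvector of `T` and `ν` its eigenvalue. Summing the
eigenvalue equation over the branch that an edge `a – b` cuts off from the root (Green's formula)
gives `ν · ∑_branch f = w(b, a) (f b - f a)`. At the boundary edge this shows `ν > 0`, and then at
every edge that `f` strictly increases away from the root, so `f vi < f vj` along the trunk.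
Now test the Rayleigh quotient of the new tree with `f`, except that the pendant vertex `z` gets
the value `f z + (f vj - f vi)`: its new edge `z – vj` carries exactly the energy of the old edge
`z – vi`, so the quadratic form is still `ν ‖f‖²`, while the norm has strictly increased.
-/

namespace Matrix

variable {W : Type*} [Fintype W] [DecidableEq W] {A : Matrix W W ℝ}

lemma IsHermitian.minEig_le_eigenvalues (hA : A.IsHermitian) (i : W) :
    minEig A ≤ hA.eigenvalues i := by
  have hcard : 0 < Fintype.card W := Fintype.card_pos_iff.mpr ⟨i⟩
  rw [minEig, kthEig, dif_pos hA, dif_pos hcard]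
  set g := hA.eigenvalues ∘ (Fintype.equivFin W).symm
  have hi : hA.eigenvalues i = (g ∘ Tuple.sort g) ((Tuple.sort g).symm (Fintype.equivFin W i)) := by
    simp [g]
  exact hi ▸ Tuple.monotone_sort g (Fin.le_def.mpr (Nat.zero_le _))

open Unitary in
lemma IsHermitian.posSemidef_sub_minEig_smul_one (hA : A.IsHermitian) :
    (A - minEig A • 1).PosSemidef := by
  have hspec : A - minEig A • 1 = conjStarAlgAut ℝ _ hA.eigenvectorUnitary
      (diagonal (RCLike.ofReal ∘ hA.eigenvalues) - minEig A • 1) := by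
    nth_rewrite 1 [hA.spectral_theorem]
    rw [map_sub, map_smul, map_one]
  rw [hspec]
  simp [isUnit_coe.posSemidef_star_right_conjugate_iff, smul_one_eq_diagonal,
    hA.minEig_le_eigenvalues]

lemma IsHermitian.minEig_mul_dotProduct_self_le (hA : A.IsHermitian) (g : W → ℝ) :
    minEig A * (g ⬝ᵥ g) ≤ g ⬝ᵥ (A *ᵥ g) := by
  have h := hA.posSemidef_sub_minEig_smul_one.dotProduct_mulVec_nonneg g
  simp only [star_trivial, sub_mulVec, smul_mulVec, one_mulVec, dotProduct_sub,
    dotProduct_smul, smul_eq_mul] at h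
  linarith

lemma IsHermitian.minEig_lt_of_dotProduct_mulVec_lt (hA : A.IsHermitian) {g : W → ℝ} {c : ℝ}
    (h : g ⬝ᵥ (A *ᵥ g) < c * (g ⬝ᵥ g)) : minEig A < c := by
  have hle := hA.minEig_mul_dotProduct_self_le g
  have hg : 0 ≤ g ⬝ᵥ g := by simpa using dotProduct_star_self_nonneg g
  nlinarith

end Matrix

section DirichletForm

variable {V : Type*}

noncomputable def zeroExt (S : Set V) (f : S → ℝ) : V → ℝ := Function.extend Subtype.val f 0

@[simp]
lemma zeroExt_coe {S : Set V} (f : S → ℝ) (a : S) : zeroExt S f a = f a :=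
  Subtype.val_injective.extend_apply f 0 a

lemma zeroExt_of_notMem {S : Set V} (f : S → ℝ) {v : V} (hv : v ∉ S) : zeroExt S f v = 0 :=
  Function.extend_apply' _ _ _ fun ⟨a, ha⟩ => hv (ha ▸ a.2)

lemma zeroExt_nonneg {S : Set V} {f : S → ℝ} (hf : ∀ a, 0 ≤ f a) (v : V) :
    0 ≤ zeroExt S f v := by
  by_cases hv : v ∈ S
  · exact (zeroExt_coe f ⟨v, hv⟩).symm ▸ hf _
  · exact (zeroExt_of_notMem f hv).ge

lemma zeroExt_update [DecidableEq V] {S : Set V} (f : S → ℝ) (a : S) (c : ℝ) :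
    zeroExt S (Function.update f a c) = Function.update (zeroExt S f) a c := by
  funext v
  by_cases hv : v ∈ S
  · lift v to S using hv
    simp [Function.update_apply, Subtype.ext_iff]
  · rw [zeroExt_of_notMem _ hv, Function.update_of_ne (fun (h : v = a) => hv (h ▸ a.2)),
      zeroExt_of_notMem _ hv]

lemma sum_mul_sub_eq_zero_of_symm {w : V → V → ℝ} (hw : ∀ a u, w a u = w u a) (F : V → ℝ)
    (s : Finset V) : ∑ v ∈ s, ∑ u ∈ s, w v u * (F v - F u) = 0 := by
  have hswap : ∑ v ∈ s, ∑ u ∈ s, w v u * (F v - F u)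
      = -∑ v ∈ s, ∑ u ∈ s, w v u * (F v - F u) := by
    conv_lhs => rw [Finset.sum_comm]
    rw [← Finset.sum_neg_distrib]
    refine Finset.sum_congr rfl fun v _ => ?_
    rw [← Finset.sum_neg_distrib]
    exact Finset.sum_congr rfl fun u _ => by rw [hw]; ring
  linarith

variable [Fintype V]

lemma sum_subtype_eq_sum_of_notMem {S : Set V} [Fintype S] (φ : V → ℝ)
    (hφ : ∀ v ∉ S, φ v = 0) : ∑ a : S, φ a = ∑ v, φ v := by
  rw [Finset.sum_set_coe]
  exact Finset.sum_subset (Finset.subset_univ _) fun v _ hv => hφ v (by simpa using hv)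

lemma dotProduct_self_eq_sum_zeroExt {S : Set V} [Fintype S] (f : S → ℝ) :
    f ⬝ᵥ f = ∑ v, zeroExt S f v ^ 2 := by
  rw [dotProduct, ← sum_subtype_eq_sum_of_notMem (S := S)]
  · simp [sq]
  · intro v hv
    simp [zeroExt_of_notMem f hv]

/-- Each edge is counted in both directions: this is twice the usual Dirichlet energy. -/
noncomputable def dirichletEnergy (w : V → V → ℝ) (F : V → ℝ) : ℝ :=
  ∑ a, ∑ u, w a u * (F a - F u) ^ 2

variable [DecidableEq V] {w : V → V → ℝ} {S : Set V}

lemma dirichletEnergy_eq_add_row (hw : ∀ a u, w a u = w u a) (F : V → ℝ) (z : V) :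
    dirichletEnergy w F
      = ∑ a ∈ Finset.univ.erase z, ∑ u ∈ Finset.univ.erase z, w a u * (F a - F u) ^ 2
        + 2 * ∑ u, w z u * (F z - F u) ^ 2 := by
  set φ : V → V → ℝ := fun a u => w a u * (F a - F u) ^ 2
  have hz : z ∈ Finset.univ := Finset.mem_univ z
  have hrow : ∀ a, ∑ u, φ a u = φ a z + ∑ u ∈ Finset.univ.erase z, φ a u := fun a =>
    (Finset.add_sum_erase _ _ hz).symm
  have hcol : ∑ a ∈ Finset.univ.erase z, φ a z = ∑ u, φ z u := by
    rw [Finset.sum_erase _ (by simp [φ])]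
    exact Finset.sum_congr rfl fun a _ => by simp only [φ]; rw [hw]; ring
  rw [dirichletEnergy, ← Finset.add_sum_erase _ _ hz]
  change ∑ u, φ z u + ∑ a ∈ Finset.univ.erase z, ∑ u, φ a u = _
  rw [Finset.sum_congr rfl fun a _ => hrow a, Finset.sum_add_distrib, hcol]
  ring

lemma wLap_mulVec_apply (F : V → ℝ) (v : V) :
    (wLap w *ᵥ F) v = ∑ u, w v u * (F v - F u) := by
  simp only [wLap, sub_mulVec, mulVec_diagonal, Pi.sub_apply]
  simp [mulVec, dotProduct, mul_sub, Finset.sum_mul]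

lemma isHermitian_dirichletMatrix (hw : ∀ a u, w a u = w u a) :
    (dirichletMatrix w S).IsHermitian := by
  ext i j
  by_cases h : i = j
  · simp [h]
  · simp [dirichletMatrix, wLap, h, Ne.symm h, Subtype.val_inj, hw j i]

variable [Fintype S]

lemma dirichletMatrix_mulVec_apply (f : S → ℝ) (a : S) :
    (dirichletMatrix w S *ᵥ f) a = ∑ u, w a u * (zeroExt S f a - zeroExt S f u) := by
  rw [← wLap_mulVec_apply, mulVec, dotProduct, mulVec, dotProduct,
    ← sum_subtype_eq_sum_of_notMem (S := S)]
  · simp [dirichletMatrix]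
  · intro v hv
    simp [zeroExt_of_notMem f hv]

lemma dotProduct_dirichletMatrix_mulVec (f : S → ℝ) :
    f ⬝ᵥ (dirichletMatrix w S *ᵥ f)
      = ∑ v, ∑ u, w v u * (zeroExt S f v * (zeroExt S f v - zeroExt S f u)) := by
  rw [dotProduct, ← sum_subtype_eq_sum_of_notMem (S := S)]
  · simp [dirichletMatrix_mulVec_apply, Finset.mul_sum, mul_left_comm]
  · intro v hv
    simp [zeroExt_of_notMem f hv]

lemma two_mul_dotProduct_dirichletMatrix_mulVec (hw : ∀ a u, w a u = w u a) (f : S → ℝ) :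
    2 * (f ⬝ᵥ (dirichletMatrix w S *ᵥ f)) = dirichletEnergy w (zeroExt S f) := by
  set F := zeroExt S f
  have hswap : ∑ v, ∑ u, w v u * (F v * (F v - F u))
      = ∑ v, ∑ u, w v u * (F u * (F u - F v)) := by
    rw [Finset.sum_comm]
    exact Finset.sum_congr rfl fun v _ => Finset.sum_congr rfl fun u _ => by rw [hw]
  rw [dotProduct_dirichletMatrix_mulVec, two_mul]
  nth_rewrite 2 [hswap]
  rw [dirichletEnergy, ← Finset.sum_add_distrib]
  refine Finset.sum_congr rfl fun v _ => ?_
  rw [← Finset.sum_add_distrib]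
  exact Finset.sum_congr rfl fun u _ => by ring

variable {f : S → ℝ} {ν : ℝ}

lemma sum_mul_sub_zeroExt_of_mulVec_eq (hf : dirichletMatrix w S *ᵥ f = ν • f) {v : V}
    (hv : v ∈ S) : ∑ u, w v u * (zeroExt S f v - zeroExt S f u) = ν * zeroExt S f v := by
  have hfv : zeroExt S f v = f ⟨v, hv⟩ := zeroExt_coe f ⟨v, hv⟩
  simpa [dirichletMatrix_mulVec_apply, hfv] using congrFun hf ⟨v, hv⟩

lemma mul_sum_zeroExt_eq_flux (hw : ∀ a u, w a u = w u a)
    (hf : dirichletMatrix w S *ᵥ f = ν • f) {s : Finset V} (hs : ∀ v ∈ s, v ∈ S) :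
    ν * ∑ v ∈ s, zeroExt S f v
      = ∑ v ∈ s, ∑ u ∈ sᶜ, w v u * (zeroExt S f v - zeroExt S f u) := by
  set F := zeroExt S f
  calc ν * ∑ v ∈ s, F v = ∑ v ∈ s, ∑ u, w v u * (F v - F u) := by
        rw [Finset.mul_sum]
        exact Finset.sum_congr rfl fun v hv => (sum_mul_sub_zeroExt_of_mulVec_eq hf (hs v hv)).symm
    _ = ∑ v ∈ s, ∑ u ∈ s, w v u * (F v - F u) + ∑ v ∈ s, ∑ u ∈ sᶜ, w v u * (F v - F u) := by
        rw [← Finset.sum_add_distrib]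
        exact Finset.sum_congr rfl fun v _ => (Finset.sum_add_sum_compl s _).symm
    _ = _ := by rw [sum_mul_sub_eq_zero_of_symm hw, zero_add]

lemma minEig_dirichletMatrix_lt_of_move {w' : V → V → ℝ} (hw : ∀ a u, w a u = w u a)
    (hw' : ∀ a u, w' a u = w' u a) {z : V} (hzS : z ∈ S)
    (hoff : ∀ a u, a ≠ z → u ≠ z → w' a u = w a u) {b₁ b₂ : V} (hb₂ : b₂ ≠ z) {c : ℝ}
    (hz : ∀ u, w z u = if u = b₁ then c else 0) (hz' : ∀ u, w' z u = if u = b₂ then c else 0)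
    (hf : dirichletMatrix w S *ᵥ f = ν • f) (hν : 0 < ν) (hfz : 0 ≤ zeroExt S f z)
    (hb : zeroExt S f b₁ < zeroExt S f b₂) :
    minEig (dirichletMatrix w' S) < ν := by
  set F := zeroExt S f
  set d := F b₂ - F b₁
  -- raising the value at `z` by `d` keeps the energy of its only edge
  set g := Function.update f ⟨z, hzS⟩ (F z + d)
  have hG : zeroExt S g = Function.update F z (F z + d) := zeroExt_update f _ _
  have hGoff : ∀ a ∈ Finset.univ.erase z, zeroExt S g a = F a := fun a ha => by
    rw [hG, Function.update_of_ne (Finset.ne_of_mem_erase ha)]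
  have henergy : dirichletEnergy w' (zeroExt S g) = dirichletEnergy w F := by
    rw [dirichletEnergy_eq_add_row hw', dirichletEnergy_eq_add_row hw F z]
    congr 1
    · refine Finset.sum_congr rfl fun a ha => Finset.sum_congr rfl fun u hu => ?_
      rw [hoff a u (Finset.ne_of_mem_erase ha) (Finset.ne_of_mem_erase hu), hGoff a ha,
        hGoff u hu]
    · simp only [hz, hz', ite_mul, zero_mul, Finset.sum_ite_eq', Finset.mem_univ, if_true, hG,
        Function.update_self, Function.update_of_ne hb₂, d]
      ring
  have hnorm : f ⬝ᵥ f < g ⬝ᵥ g := by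
    have hsplit : ∀ G : V → ℝ, ∑ v, G v ^ 2 = G z ^ 2 + ∑ v ∈ Finset.univ.erase z, G v ^ 2 :=
      fun G => (Finset.add_sum_erase _ _ (Finset.mem_univ z)).symm
    have hrest : ∑ v ∈ Finset.univ.erase z, zeroExt S g v ^ 2
        = ∑ v ∈ Finset.univ.erase z, F v ^ 2 :=
      Finset.sum_congr rfl fun a ha => by rw [hGoff a ha]
    rw [dotProduct_self_eq_sum_zeroExt, dotProduct_self_eq_sum_zeroExt, hsplit F,
      hsplit (zeroExt S g), hrest, hG, Function.update_self]
    have hd : 0 < d := sub_pos.mpr hb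
    nlinarith
  apply (isHermitian_dirichletMatrix hw').minEig_lt_of_dotProduct_mulVec_lt (g := g)
  have h1 := two_mul_dotProduct_dirichletMatrix_mulVec hw' g
  have h2 := two_mul_dotProduct_dirichletMatrix_mulVec hw f
  rw [hf, dotProduct_smul, smul_eq_mul] at h2
  nlinarith

end DirichletForm

namespace SimpleGraph

variable {V : Type*} {G : SimpleGraph V}

lemma IsAcyclic.length_eq_dist (hG : G.IsAcyclic) {u v : V} {p : G.Walk u v} (hp : p.IsPath) :
    p.length = G.dist u v := by
  obtain ⟨q, hq, hlen⟩ := Reachable.exists_path_of_dist ⟨p⟩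
  have hpq : p = q := congrArg Subtype.val ((hG.subsingleton_path u v).elim ⟨p, hp⟩ ⟨q, hq⟩)
  rw [hpq, hlen]

lemma IsAcyclic.dist_getVert (hG : G.IsAcyclic) {u v : V} {p : G.Walk u v} (hp : p.IsPath)
    {n : ℕ} (hn : n ≤ p.length) : G.dist u (p.getVert n) = n := by
  rw [← hG.length_eq_dist (hp.take n), Walk.take_length, min_eq_left hn]

lemma IsTree.not_reachable_deleteEdges_of_dist_eq_add_one (hG : G.IsTree) {r y v : V}
    (hadj : G.Adj y v) (hd : G.dist r v = G.dist r y + 1) :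
    ¬(G.deleteEdges {s(y, v)}).Reachable v r := by
  intro hvr
  obtain ⟨q, -, hq⟩ := (hG.connected r y).exists_path_of_dist
  have hv : v ∉ q.support := fun hv => by
    have := G.dist_le (q.takeUntil v hv)
    have := q.length_takeUntil_le_length hv
    omega
  have hry : (G.deleteEdges {s(y, v)}).Reachable r y :=
    reachable_deleteEdges_iff_exists_walk.mpr ⟨q, fun he => hv (q.snd_mem_support_of_mem_edges he)⟩
  exact isAcyclic_iff_forall_adj_isBridge.mp hG.isAcyclic hadj (hvr.trans hry).symm

lemma eq_of_adj_of_reachable_deleteEdges {a b v u : V} (hadj : G.Adj v u)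
    (hv : (G.deleteEdges {s(a, b)}).Reachable b v) (hu : ¬(G.deleteEdges {s(a, b)}).Reachable b u) :
    s(v, u) = s(a, b) := by
  by_contra hne
  exact hu (hv.trans (Adj.reachable ((deleteEdges_adj ..).mpr ⟨hadj, hne⟩)))

lemma adj_iff_eq_of_degree_eq_one {z b : V} [Fintype (G.neighborSet z)] (hdeg : G.degree z = 1)
    (hzb : G.Adj z b) (u : V) : G.Adj z u ↔ u = b := by
  obtain ⟨c, -, huniq⟩ := degree_eq_one_iff_existsUnique_adj.mp hdeg
  exact ⟨fun h => (huniq u h).trans (huniq b hzb).symm, fun h => h ▸ hzb⟩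

lemma fromEdgeSet_move_adj_of_ne {z b₁ b₂ a u : V} (ha : a ≠ z) (hu : u ≠ z) :
    (fromEdgeSet ((G.edgeSet \ {s(z, b₁)}) ∪ {s(z, b₂)})).Adj a u ↔ G.Adj a u := by
  simpa [ha, hu] using fun h => G.ne_of_adj h

lemma fromEdgeSet_move_adj_left {z b₁ b₂ : V} (hz : ∀ u, G.Adj z u ↔ u = b₁) (hb₂ : z ≠ b₂)
    (u : V) : (fromEdgeSet ((G.edgeSet \ {s(z, b₁)}) ∪ {s(z, b₂)})).Adj z u ↔ u = b₂ := by
  simp only [fromEdgeSet_adj, Set.mem_union, Set.mem_sdiff, mem_edgeSet, hz, Set.mem_singleton_iff,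
    Sym2.eq, Sym2.rel_iff', Prod.mk.injEq, true_and]
  grind

end SimpleGraph

section RootedTree

open SimpleGraph

variable {V : Type*} [Fintype V] [DecidableEq V] {T : SimpleGraph V} {v₀ x : V} {w₀ : ℝ}

lemma treeWeight_comm (u v : V) : treeWeight T v₀ x w₀ u v = treeWeight T v₀ x w₀ v u := by
  simp only [treeWeight, T.adj_comm u v]
  congr 2
  exact propext (by tauto)

lemma treeWeight_of_not_adj {u v : V} (h : ¬T.Adj u v) : treeWeight T v₀ x w₀ u v = 0 :=
  if_neg h

lemma treeWeight_pos (hw₀ : 0 < w₀) {u v : V} (h : T.Adj u v) : 0 < treeWeight T v₀ x w₀ u v := by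
  rw [treeWeight, if_pos h]
  split_ifs <;> norm_num [hw₀]

lemma treeWeight_of_adj_root (hx : T.Adj v₀ x) : treeWeight T v₀ x w₀ x v₀ = w₀ := by
  simp [treeWeight, hx.symm]

lemma treeWeight_congr {T' : SimpleGraph V} {u v : V} (h : T'.Adj u v ↔ T.Adj u v) :
    treeWeight T' v₀ x w₀ u v = treeWeight T v₀ x w₀ u v := by
  simp only [treeWeight, h]

lemma treeWeight_eq_ite_of_adj_iff {z b : V} (hz₀ : z ≠ v₀) (hzx : z ≠ x)
    (hz : ∀ u, T.Adj z u ↔ u = b) (u : V) :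
    treeWeight T v₀ x w₀ z u = if u = b then 1 else 0 := by
  simp [treeWeight, hz, hz₀, hzx]

variable {f : ({v₀}ᶜ : Set V) → ℝ} {ν : ℝ}

lemma mul_sum_reachable_eq_treeWeight_mul_sub
    (hf : dirichletMatrix (treeWeight T v₀ x w₀) {v₀}ᶜ *ᵥ f = ν • f) (hT : T.IsAcyclic)
    {a b : V} (hab : T.Adj a b) (hb : ¬(T.deleteEdges {s(a, b)}).Reachable b v₀) :
    ν * ∑ v with (T.deleteEdges {s(a, b)}).Reachable b v, zeroExt _ f v
      = treeWeight T v₀ x w₀ b a * (zeroExt _ f b - zeroExt _ f a) := by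
  set s := Finset.univ.filter ((T.deleteEdges {s(a, b)}).Reachable b)
  have hbs : b ∈ s := by simp [s]
  have has : a ∉ s := fun h =>
    isBridge_iff.mp (isAcyclic_iff_forall_adj_isBridge.mp hT hab) (Finset.mem_filter.mp h).2.symm
  have hcut : ∀ v ∈ s, ∀ u ∈ sᶜ, T.Adj v u → v = b ∧ u = a := fun v hv u hu hvu => by
    have hsep := eq_of_adj_of_reachable_deleteEdges hvu (Finset.mem_filter.mp hv).2
      fun h => Finset.mem_compl.mp hu (by simpa [s] using h)
    rcases Sym2.eq_iff.mp hsep with ⟨rfl, -⟩ | h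
    · exact absurd hv has
    · exact h
  have hsS : ∀ v ∈ s, v ∈ ({v₀}ᶜ : Set V) := fun v hv =>
    Set.mem_compl_singleton_iff.mpr fun h => hb (h ▸ (Finset.mem_filter.mp hv).2)
  rw [mul_sum_zeroExt_eq_flux treeWeight_comm hf hsS]
  rw [Finset.sum_eq_single_of_mem b hbs, Finset.sum_eq_single_of_mem a (Finset.mem_compl.mpr has)]
  · intro u hu hua
    rw [treeWeight_of_not_adj fun h => hua (hcut b hbs u hu h).2, zero_mul]
  · intro v hv hvb
    refine Finset.sum_eq_zero fun u hu => ?_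
    rw [treeWeight_of_not_adj fun h => hvb (hcut v hv u hu h).1, zero_mul]

lemma treeWeight_eigenvalue_pos (hf : dirichletMatrix (treeWeight T v₀ x w₀) {v₀}ᶜ *ᵥ f = ν • f)
    (hfpos : ∀ a, 0 < f a) (hT : T.IsTree) (hx : T.Adj v₀ x) (hw₀ : 0 < w₀) : 0 < ν := by
  have hsep : ¬(T.deleteEdges {s(v₀, x)}).Reachable x v₀ := fun h =>
    isBridge_iff.mp (isAcyclic_iff_forall_adj_isBridge.mp hT.isAcyclic hx) h.symm
  have hflux := mul_sum_reachable_eq_treeWeight_mul_sub hf hT.isAcyclic hx hsep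
  rw [treeWeight_of_adj_root hx, zeroExt_of_notMem f (v := v₀) (by simp), sub_zero] at hflux
  have hFx : 0 < zeroExt _ f x := (zeroExt_coe f ⟨x, hx.ne'⟩).symm ▸ hfpos _
  have hmass := Finset.sum_nonneg fun v (_ : v ∈ Finset.univ.filter
    ((T.deleteEdges {s(v₀, x)}).Reachable x)) => zeroExt_nonneg (fun a => (hfpos a).le) v
  nlinarith

lemma zeroExt_lt_of_adj (hf : dirichletMatrix (treeWeight T v₀ x w₀) {v₀}ᶜ *ᵥ f = ν • f)
    (hfpos : ∀ a, 0 < f a) (hT : T.IsAcyclic) (hw₀ : 0 < w₀) (hν : 0 < ν) {a b : V}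
    (hab : T.Adj a b) (hb : ¬(T.deleteEdges {s(a, b)}).Reachable b v₀) :
    zeroExt _ f a < zeroExt _ f b := by
  have hflux := mul_sum_reachable_eq_treeWeight_mul_sub hf hT hab hb
  have hFb : 0 < zeroExt _ f b :=
    (zeroExt_coe f ⟨b, fun h => hb (h ▸ Reachable.refl b)⟩).symm ▸ hfpos _
  have hmass : zeroExt _ f b ≤ ∑ v with (T.deleteEdges {s(a, b)}).Reachable b v, zeroExt _ f v :=
    Finset.single_le_sum (fun v _ => zeroExt_nonneg (fun a => (hfpos a).le) v) (by simp)
  have hw := treeWeight_pos (v₀ := v₀) (x := x) hw₀ hab.symm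
  nlinarith

lemma zeroExt_getVert_lt (hf : dirichletMatrix (treeWeight T v₀ x w₀) {v₀}ᶜ *ᵥ f = ν • f)
    (hfpos : ∀ a, 0 < f a) (hT : T.IsTree) (hw₀ : 0 < w₀) (hν : 0 < ν) {t : V}
    {p : T.Walk v₀ t} (hp : p.IsPath) {i j : ℕ} (hij : i < j) (hj : j ≤ p.length) :
    zeroExt _ f (p.getVert i) < zeroExt _ f (p.getVert j) := by
  induction j with
  | zero => omega
  | succ j ih =>
    have hadj := p.adj_getVert_succ (Nat.lt_of_succ_le hj)
    have hstep := zeroExt_lt_of_adj hf hfpos hT.isAcyclic hw₀ hν hadj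
      (hT.not_reachable_deleteEdges_of_dist_eq_add_one hadj (by
        rw [hT.isAcyclic.dist_getVert hp hj, hT.isAcyclic.dist_getVert hp (by omega)]))
    rcases Nat.lt_succ_iff_lt_or_eq.mp hij with h | rfl
    · exact (ih h (by omega)).trans hstep
    · exact hstep

lemma zeroExt_lt_of_dist_lt (hf : dirichletMatrix (treeWeight T v₀ x w₀) {v₀}ᶜ *ᵥ f = ν • f)
    (hfpos : ∀ a, 0 < f a) (hT : T.IsTree) (hw₀ : 0 < w₀) (hν : 0 < ν) {t : V}
    {p : T.Walk v₀ t} (hp : p.IsPath) {u v : V} (hu : u ∈ p.support) (hv : v ∈ p.support)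
    (huv : T.dist v₀ u < T.dist v₀ v) : zeroExt _ f u < zeroExt _ f v := by
  obtain ⟨i, rfl, hi⟩ := Walk.mem_support_iff_exists_getVert.mp hu
  obtain ⟨j, rfl, hj⟩ := Walk.mem_support_iff_exists_getVert.mp hv
  rw [hT.isAcyclic.dist_getVert hp hi, hT.isAcyclic.dist_getVert hp hj] at huv
  exact zeroExt_getVert_lt hf hfpos hT hw₀ hν hp huv hj

end RootedTree

theorem dirichlet_perturbation_P1_general {V : Type*} [Fintype V] [DecidableEq V]
    (T : SimpleGraph V) (hT : T.IsTree) (v₀ x : V) (hx : T.Adj v₀ x)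
    (w₀ : ℝ) (hw₀ : 1 ≤ w₀)
    (t : V) (p : T.Walk v₀ t) (hp : p.IsPath)
    (vi vj : V) (hvi : vi ∈ p.support) (hvj : vj ∈ p.support)
    (hij : T.dist v₀ vi < T.dist v₀ vj)
    (z : V) (hz₀ : z ≠ v₀) (hzx : z ≠ x) (hzj : z ≠ vj)
    (hzpend : T.degree z = 1) (hzi : T.Adj z vi)
    (hposvec : ∃ f : ({v₀}ᶜ : Set V) → ℝ, (∀ a, 0 < f a) ∧
      (dirichletMatrix (treeWeight T v₀ x w₀) ({v₀}ᶜ : Set V)) *ᵥ f =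
        nuRooted T v₀ x w₀ • f) :
    nuRooted (SimpleGraph.fromEdgeSet ((T.edgeSet \ {s(z, vi)}) ∪ {s(z, vj)}))
        v₀ x w₀ < nuRooted T v₀ x w₀ := by
  obtain ⟨f, hfpos, hf⟩ := hposvec
  have hw₀' : 0 < w₀ := zero_lt_one.trans_le hw₀
  have hν := treeWeight_eigenvalue_pos hf hfpos hT hx hw₀'
  have hzT := SimpleGraph.adj_iff_eq_of_degree_eq_one hzpend hzi
  exact minEig_dirichletMatrix_lt_of_move treeWeight_comm treeWeight_comm hz₀
    (fun a u ha hu => treeWeight_congr (SimpleGraph.fromEdgeSet_move_adj_of_ne ha hu)) hzj.symm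
    (treeWeight_eq_ite_of_adj_iff hz₀ hzx hzT)
    (treeWeight_eq_ite_of_adj_iff hz₀ hzx (SimpleGraph.fromEdgeSet_move_adj_left hzT hzj))
    hf hν (zeroExt_nonneg (fun a => (hfpos a).le) z)
    (zeroExt_lt_of_dist_lt hf hfpos hT hw₀' hν hp hvi hvj hij)

/-- perturbation P1: moving a pendant vertex from a trunk vertex
to a trunk vertex of larger height strictly decreases the first Dirichlet
eigenvalue. -/
theorem dirichlet_perturbation_P1 {V : Type*} [Fintype V] [DecidableEq V]
    (T : SimpleGraph V) (hT : T.IsTree) (v₀ x : V) (hx : T.Adj v₀ x)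
    (w₀ : ℝ) (hw₀ : 1 ≤ w₀)
    (t : V) (p : T.Walk v₀ t) (hp : p.IsPath)
    (hlongest : ∀ (u : V) (q : T.Walk v₀ u), q.IsPath → q.length ≤ p.length)
    (vi vj : V) (hvi : vi ∈ p.support) (hvj : vj ∈ p.support)
    (hij : T.dist v₀ vi < T.dist v₀ vj)
    (z : V) (hz₀ : z ≠ v₀) (hzx : z ≠ x) (hzj : z ≠ vj)
    (hzpend : T.degree z = 1) (hzi : T.Adj z vi)
    (hposvec : ∃ f : ({v₀}ᶜ : Set V) → ℝ, (∀ a, 0 < f a) ∧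
      (dirichletMatrix (treeWeight T v₀ x w₀) ({v₀}ᶜ : Set V)) *ᵥ f =
        nuRooted T v₀ x w₀ • f) :
    nuRooted (SimpleGraph.fromEdgeSet ((T.edgeSet \ {s(z, vi)}) ∪ {s(z, vj)}))
        v₀ x w₀ < nuRooted T v₀ x w₀ :=
  dirichlet_perturbation_P1_general T hT v₀ x hx w₀ hw₀ t p hp vi vj hvi hvj hij z hz₀ hzx hzj
    hzpend hzi hposvec
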